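/- Suboptimality bound (combination): in a finite goal-augmented MDP with rewards in [0, R_max] and discount γ ∈ [0,1), for any policy π, expert policy π_E, and test distribution T over initial state-goal pairs, SubOpt(π_E, π) := E_{(s0,g)∼T}[V^{π_E}(s0,g) − V^{π}(s0,g)] ≤ (2 R_max/(1−γ)²) · E_{(s0,g)∼T, s∼d_{π_E}(·|s0,g)}[D_TV(π(·|s,g), π_E(·|s,g))]. -/
import Mathlib


/-- State distribution at time `t` of the Markov chain induced by policy `π` and
transition kernel `P` starting at `s0`. -/
noncomputable def stateDist {S A : Type*} [Fintype S] [Fintype A] [DecidableEq S]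
    (P : S → A → S → ℝ) (π : S → A → ℝ) (s0 : S) : ℕ → S → ℝ
  | 0, s => if s = s0 then 1 else 0
  | (t + 1), s => ∑ s' : S, ∑ a : A, stateDist P π s0 t s' * π s' a * P s' a s

/-- Expected discounted return of a goal-conditioned policy `π` from initial state `s0`
with goal `g`. -/
noncomputable def goalValue {S G A : Type*} [Fintype S] [Fintype A] [DecidableEq S]
    (P : S → A → S → ℝ) (r : S → A → G → ℝ) (γ : ℝ)
    (π : S → G → A → ℝ) (s0 : S) (g : G) : ℝ :=
  ∑' t : ℕ, γ ^ t * ∑ s, ∑ a, stateDist P (fun s' a => π s' g a) s0 t s * π s g a * r s a g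

/-- Discounted state occupancy of policy `π` conditioned on goal `g`, from `s0`. -/
noncomputable def goalOcc {S G A : Type*} [Fintype S] [Fintype A] [DecidableEq S]
    (P : S → A → S → ℝ) (γ : ℝ) (π : S → G → A → ℝ) (s0 : S) (g : G) (s : S) : ℝ :=
  (1 - γ) * ∑' t : ℕ, γ ^ t * stateDist P (fun s' a => π s' g a) s0 t s

lemma sd_nonneg {S A : Type*} [Fintype S] [Fintype A] [DecidableEq S]
    (P : S → A → S → ℝ) (π : S → A → ℝ) (s0 : S)
    (hP : ∀ s a s', 0 ≤ P s a s') (hπ : ∀ s a, 0 ≤ π s a) :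
    ∀ t s, 0 ≤ stateDist P π s0 t s := by
  intro t
  induction t with
  | zero => intro s; simp [stateDist]; positivity
  | succ t ih =>
    intro s
    simp only [stateDist]
    apply Finset.sum_nonneg; intro s' _
    apply Finset.sum_nonneg; intro a _
    exact mul_nonneg (mul_nonneg (ih s') (hπ s' a)) (hP s' a s)

lemma sd_sum {S A : Type*} [Fintype S] [Fintype A] [DecidableEq S]
    (P : S → A → S → ℝ) (π : S → A → ℝ) (s0 : S)
    (hP : ∀ s a, ∑ s', P s a s' = 1) (hπ : ∀ s, ∑ a, π s a = 1) :
    ∀ t, ∑ s, stateDist P π s0 t s = 1 := by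
  intro t
  induction t with
  | zero => simp [stateDist]
  | succ t ih =>
    simp only [stateDist]
    rw [Finset.sum_comm]
    calc ∑ s' : S, ∑ s : S, ∑ a : A, stateDist P π s0 t s' * π s' a * P s' a s
        = ∑ s' : S, ∑ a : A, ∑ s : S, stateDist P π s0 t s' * π s' a * P s' a s := by
          refine Finset.sum_congr rfl fun s' _ => Finset.sum_comm
      _ = ∑ s' : S, ∑ a : A, stateDist P π s0 t s' * π s' a := by
          refine Finset.sum_congr rfl fun s' _ => Finset.sum_congr rfl fun a _ => ?_
          rw [← Finset.mul_sum, hP, mul_one]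
      _ = ∑ s' : S, stateDist P π s0 t s' := by
          refine Finset.sum_congr rfl fun s' _ => ?_
          rw [← Finset.mul_sum, hπ, mul_one]
      _ = 1 := ih

/-- ℓ¹ bound on the joint state-action distribution difference. -/
lemma l1_step {S A : Type*} [Fintype S] [Fintype A] (μ ν : S → ℝ) (hμ : ∀ s, 0 ≤ μ s)
    (πp πe : S → A → ℝ) (hπp0 : ∀ s a, 0 ≤ πp s a) (hπp1 : ∀ s, ∑ a, πp s a = 1) :
    ∑ s, ∑ a, |μ s * πe s a - ν s * πp s a| ≤
      (∑ s, |μ s - ν s|) + ∑ s, μ s * ∑ a, |πp s a - πe s a| := by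
  rw [← Finset.sum_add_distrib]
  refine Finset.sum_le_sum fun s _ => ?_
  calc ∑ a, |μ s * πe s a - ν s * πp s a|
      ≤ ∑ a, (μ s * |πe s a - πp s a| + |μ s - ν s| * πp s a) := by
        refine Finset.sum_le_sum fun a _ => ?_
        have h : μ s * πe s a - ν s * πp s a
            = μ s * (πe s a - πp s a) + (μ s - ν s) * πp s a := by ring
        rw [h]
        refine (abs_add_le _ _).trans ?_
        rw [abs_mul, abs_mul, abs_of_nonneg (hμ s), abs_of_nonneg (hπp0 s a)]
    _ = μ s * (∑ a, |πe s a - πp s a|) + |μ s - ν s| * ∑ a, πp s a := by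
        rw [Finset.sum_add_distrib, Finset.mul_sum, Finset.mul_sum]
    _ = |μ s - ν s| + μ s * ∑ a, |πp s a - πe s a| := by
        rw [hπp1, mul_one, add_comm]
        simp [abs_sub_comm]

lemma tsumRec (γ : ℝ) (hγ0 : 0 ≤ γ) (hγ1 : γ < 1) (D e : ℕ → ℝ)
    (hD0 : ∀ t, 0 ≤ D t) (hD2 : ∀ t, D t ≤ 2)
    (he0 : ∀ t, 0 ≤ e t) (he2 : ∀ t, e t ≤ 2)
    (hD00 : D 0 = 0) (hrec : ∀ t, D (t + 1) ≤ D t + e t) :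
    ∑' t : ℕ, γ ^ t * D t ≤ (γ / (1 - γ)) * ∑' t : ℕ, γ ^ t * e t := by
  have h1γ : (0:ℝ) < 1 - γ := by linarith
  have hgeo : Summable (fun t : ℕ => γ ^ t) := summable_geometric_of_lt_one hγ0 hγ1
  have hsD : Summable (fun t : ℕ => γ ^ t * D t) :=
    Summable.of_nonneg_of_le (fun t => mul_nonneg (pow_nonneg hγ0 t) (hD0 t))
      (fun t => mul_le_mul_of_nonneg_left (hD2 t) (pow_nonneg hγ0 t)) (hgeo.mul_right 2)
  have hsE : Summable (fun t : ℕ => γ ^ t * e t) :=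
    Summable.of_nonneg_of_le (fun t => mul_nonneg (pow_nonneg hγ0 t) (he0 t))
      (fun t => mul_le_mul_of_nonneg_left (he2 t) (pow_nonneg hγ0 t)) (hgeo.mul_right 2)
  set W := ∑' t : ℕ, γ ^ t * D t with hW
  set E := ∑' t : ℕ, γ ^ t * e t with hE
  have hE0 : 0 ≤ E := tsum_nonneg fun t => mul_nonneg (pow_nonneg hγ0 t) (he0 t)
  have key : W ≤ γ * W + γ * E := by
    have h1 : W = ∑' t : ℕ, γ ^ (t + 1) * D (t + 1) := by
      rw [hW, Summable.tsum_eq_zero_add hsD, hD00]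
      simp
    have hs1 : Summable (fun t : ℕ => γ ^ (t + 1) * D (t + 1)) :=
      (summable_nat_add_iff 1).mpr hsD
    have hs2 : Summable (fun t : ℕ => γ * (γ ^ t * D t) + γ * (γ ^ t * e t)) :=
      (hsD.mul_left γ).add (hsE.mul_left γ)
    have h2 : ∑' t : ℕ, γ ^ (t + 1) * D (t + 1)
        ≤ ∑' t : ℕ, (γ * (γ ^ t * D t) + γ * (γ ^ t * e t)) := by
      refine Summable.tsum_le_tsum (fun t => ?_) hs1 hs2
      calc γ ^ (t + 1) * D (t + 1) ≤ γ ^ (t + 1) * (D t + e t) :=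
            mul_le_mul_of_nonneg_left (hrec t) (pow_nonneg hγ0 _)
        _ = γ * (γ ^ t * D t) + γ * (γ ^ t * e t) := by ring
    have h3 : ∑' t : ℕ, (γ * (γ ^ t * D t) + γ * (γ ^ t * e t)) = γ * W + γ * E := by
      rw [Summable.tsum_add (hsD.mul_left γ) (hsE.mul_left γ), tsum_mul_left, tsum_mul_left]
    linarith [h1 ▸ h2, h3]
  rw [div_mul_eq_mul_div, le_div_iff₀ h1γ]
  nlinarith

lemma pair_core {S : Type*} [Fintype S] (γ Rmax : ℝ)
    (hR : 0 ≤ Rmax) (hγ0 : 0 ≤ γ) (hγ1 : γ < 1)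
    (X Y D e : ℕ → ℝ) (M : ℕ → S → ℝ) (Δ : S → ℝ)
    (hM0 : ∀ t s, 0 ≤ M t s) (hMs : ∀ t, ∑ s, M t s = 1)
    (hΔ0 : ∀ s, 0 ≤ Δ s) (hΔ2 : ∀ s, Δ s ≤ 2)
    (hX0 : ∀ t, 0 ≤ X t) (hXb : ∀ t, X t ≤ Rmax)
    (hY0 : ∀ t, 0 ≤ Y t) (hYb : ∀ t, Y t ≤ Rmax)
    (hD0 : ∀ t, 0 ≤ D t) (hD2 : ∀ t, D t ≤ 2)
    (hedef : ∀ t, e t = ∑ s, M t s * Δ s)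
    (hD00 : D 0 = 0) (hrec : ∀ t, D (t + 1) ≤ D t + e t)
    (hgap : ∀ t, X t - Y t ≤ (Rmax / 2) * (D t + e t)) :
    (∑' t : ℕ, γ ^ t * X t) - (∑' t : ℕ, γ ^ t * Y t) ≤
      (2 * Rmax / (1 - γ) ^ 2) *
        ∑ s, ((1 - γ) * ∑' t : ℕ, γ ^ t * M t s) * ((1 / 2) * Δ s) := by
  have h1γ : (0:ℝ) < 1 - γ := by linarith
  have hgeo : Summable (fun t : ℕ => γ ^ t) := summable_geometric_of_lt_one hγ0 hγ1
  have hpow : ∀ t : ℕ, (0:ℝ) ≤ γ ^ t := fun t => pow_nonneg hγ0 t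
  have hMb : ∀ t s, M t s ≤ 1 := fun t s => by
    calc M t s ≤ ∑ s', M t s' :=
          Finset.single_le_sum (fun s' _ => hM0 t s') (Finset.mem_univ s)
      _ = 1 := hMs t
  have he0 : ∀ t, 0 ≤ e t := fun t => by
    rw [hedef]; exact Finset.sum_nonneg fun s _ => mul_nonneg (hM0 t s) (hΔ0 s)
  have he2 : ∀ t, e t ≤ 2 := fun t => by
    rw [hedef]
    calc ∑ s, M t s * Δ s ≤ ∑ s, M t s * 2 :=
          Finset.sum_le_sum fun s _ => mul_le_mul_of_nonneg_left (hΔ2 s) (hM0 t s)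
      _ = 2 := by rw [← Finset.sum_mul, hMs t, one_mul]
  have hsX : Summable (fun t : ℕ => γ ^ t * X t) :=
    Summable.of_nonneg_of_le (fun t => mul_nonneg (hpow t) (hX0 t))
      (fun t => mul_le_mul_of_nonneg_left (hXb t) (hpow t)) (hgeo.mul_right Rmax)
  have hsY : Summable (fun t : ℕ => γ ^ t * Y t) :=
    Summable.of_nonneg_of_le (fun t => mul_nonneg (hpow t) (hY0 t))
      (fun t => mul_le_mul_of_nonneg_left (hYb t) (hpow t)) (hgeo.mul_right Rmax)
  have hsD : Summable (fun t : ℕ => γ ^ t * D t) :=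
    Summable.of_nonneg_of_le (fun t => mul_nonneg (hpow t) (hD0 t))
      (fun t => mul_le_mul_of_nonneg_left (hD2 t) (hpow t)) (hgeo.mul_right 2)
  have hsE : Summable (fun t : ℕ => γ ^ t * e t) :=
    Summable.of_nonneg_of_le (fun t => mul_nonneg (hpow t) (he0 t))
      (fun t => mul_le_mul_of_nonneg_left (he2 t) (hpow t)) (hgeo.mul_right 2)
  have hsM : ∀ s : S, Summable (fun t : ℕ => γ ^ t * M t s) := fun s =>
    Summable.of_nonneg_of_le (fun t => mul_nonneg (hpow t) (hM0 t s))
      (fun t => mul_le_mul_of_nonneg_left (hMb t s) (hpow t)) (hgeo.mul_right 1)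
  have hsMΔ : ∀ s : S, Summable (fun t : ℕ => γ ^ t * (M t s * Δ s)) := fun s =>
    ((hsM s).mul_right (Δ s)).congr fun t => by ring
  have hW : ∑' t : ℕ, γ ^ t * D t ≤ (γ / (1 - γ)) * ∑' t : ℕ, γ ^ t * e t :=
    tsumRec γ hγ0 hγ1 D e hD0 hD2 he0 he2 hD00 hrec
  have hE0 : 0 ≤ ∑' t : ℕ, γ ^ t * e t := tsum_nonneg fun t => mul_nonneg (hpow t) (he0 t)
  have hEeq : ∑' t : ℕ, γ ^ t * e t = ∑ s, (∑' t : ℕ, γ ^ t * M t s) * Δ s := by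
    have h1 : ∀ t : ℕ, γ ^ t * e t = ∑ s, γ ^ t * (M t s * Δ s) := fun t => by
      rw [hedef, Finset.mul_sum]
    rw [tsum_congr h1, Summable.tsum_finsetSum (fun s _ => hsMΔ s)]
    refine Finset.sum_congr rfl fun s _ => ?_
    rw [show (fun t : ℕ => γ ^ t * (M t s * Δ s)) = fun t => (γ ^ t * M t s) * Δ s from
      funext fun t => by ring, tsum_mul_right]
  calc (∑' t : ℕ, γ ^ t * X t) - (∑' t : ℕ, γ ^ t * Y t)
      = ∑' t : ℕ, (γ ^ t * X t - γ ^ t * Y t) := (Summable.tsum_sub hsX hsY).symm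
    _ ≤ ∑' t : ℕ, ((Rmax / 2) * (γ ^ t * D t) + (Rmax / 2) * (γ ^ t * e t)) := by
        refine Summable.tsum_le_tsum (fun t => ?_) (hsX.sub hsY)
          ((hsD.mul_left _).add (hsE.mul_left _))
        have h : γ ^ t * X t - γ ^ t * Y t = γ ^ t * (X t - Y t) := by ring
        rw [h]
        calc γ ^ t * (X t - Y t) ≤ γ ^ t * ((Rmax / 2) * (D t + e t)) :=
              mul_le_mul_of_nonneg_left (hgap t) (hpow t)
          _ = (Rmax / 2) * (γ ^ t * D t) + (Rmax / 2) * (γ ^ t * e t) := by ring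
    _ = (Rmax / 2) * (∑' t : ℕ, γ ^ t * D t) + (Rmax / 2) * (∑' t : ℕ, γ ^ t * e t) := by
        rw [Summable.tsum_add (hsD.mul_left _) (hsE.mul_left _), tsum_mul_left, tsum_mul_left]
    _ ≤ (Rmax / 2) * ((γ / (1 - γ)) * ∑' t : ℕ, γ ^ t * e t)
          + (Rmax / 2) * (∑' t : ℕ, γ ^ t * e t) := by
        have := mul_le_mul_of_nonneg_left hW (by positivity : (0:ℝ) ≤ Rmax / 2)
        linarith
    _ = (Rmax / (2 * (1 - γ))) * ∑' t : ℕ, γ ^ t * e t := by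
        field_simp
        ring
    _ ≤ (Rmax / (1 - γ)) * ∑' t : ℕ, γ ^ t * e t := by
        refine mul_le_mul_of_nonneg_right ?_ hE0
        apply div_le_div_of_nonneg_left hR h1γ
        linarith
    _ = (2 * Rmax / (1 - γ) ^ 2) *
        ∑ s, ((1 - γ) * ∑' t : ℕ, γ ^ t * M t s) * ((1 / 2) * Δ s) := by
        rw [hEeq, Finset.mul_sum, Finset.mul_sum]
        refine Finset.sum_congr rfl fun s _ => ?_
        field_simp

lemma pair_bound {S A : Type*} [Fintype S] [Fintype A] [DecidableEq S]
    (P : S → A → S → ℝ) (ρ : S → A → ℝ) (Rmax γ : ℝ)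
    (hR : 0 ≤ Rmax) (hρ : ∀ s a, 0 ≤ ρ s a ∧ ρ s a ≤ Rmax)
    (hγ0 : 0 ≤ γ) (hγ1 : γ < 1)
    (hP : ∀ s a, (∀ s', 0 ≤ P s a s') ∧ ∑ s', P s a s' = 1)
    (πp πe : S → A → ℝ)
    (hπp : ∀ s, (∀ a, 0 ≤ πp s a) ∧ ∑ a, πp s a = 1)
    (hπe : ∀ s, (∀ a, 0 ≤ πe s a) ∧ ∑ a, πe s a = 1)
    (s0 : S) :
    (∑' t : ℕ, γ ^ t * ∑ s, ∑ a, stateDist P πe s0 t s * πe s a * ρ s a)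
      - (∑' t : ℕ, γ ^ t * ∑ s, ∑ a, stateDist P πp s0 t s * πp s a * ρ s a)
      ≤ (2 * Rmax / (1 - γ) ^ 2) *
        ∑ s, ((1 - γ) * ∑' t : ℕ, γ ^ t * stateDist P πe s0 t s) *
          ((1 / 2) * ∑ a, |πp s a - πe s a|) := by
  have hP0 : ∀ s a s', 0 ≤ P s a s' := fun s a => (hP s a).1
  have hP1 : ∀ s a, ∑ s', P s a s' = 1 := fun s a => (hP s a).2
  set M := stateDist P πe s0 with hMdef
  set N := stateDist P πp s0 with hNdef
  have hM0 : ∀ t s, 0 ≤ M t s := sd_nonneg P πe s0 hP0 (fun s a => (hπe s).1 a)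
  have hM1 : ∀ t, ∑ s, M t s = 1 := sd_sum P πe s0 hP1 (fun s => (hπe s).2)
  have hN0 : ∀ t s, 0 ≤ N t s := sd_nonneg P πp s0 hP0 (fun s a => (hπp s).1 a)
  have hN1 : ∀ t, ∑ s, N t s = 1 := sd_sum P πp s0 hP1 (fun s => (hπp s).2)
  have hΔ0 : ∀ s, 0 ≤ ∑ a, |πp s a - πe s a| :=
    fun s => Finset.sum_nonneg fun a _ => abs_nonneg _
  have hΔ2 : ∀ s, (∑ a, |πp s a - πe s a|) ≤ 2 := by
    intro s
    calc ∑ a, |πp s a - πe s a| ≤ ∑ a, (πp s a + πe s a) := by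
          refine Finset.sum_le_sum fun a _ => ?_
          rw [abs_sub_le_iff]
          constructor
          · nlinarith [(hπp s).1 a, (hπe s).1 a]
          · nlinarith [(hπp s).1 a, (hπe s).1 a]
      _ = 2 := by rw [Finset.sum_add_distrib, (hπp s).2, (hπe s).2]; norm_num
  have hXmass : ∀ t, ∑ s, ∑ a, M t s * πe s a = 1 := fun t => by
    calc ∑ s, ∑ a, M t s * πe s a = ∑ s, M t s :=
          Finset.sum_congr rfl fun s _ => by rw [← Finset.mul_sum, (hπe s).2, mul_one]
      _ = 1 := hM1 t
  have hYmass : ∀ t, ∑ s, ∑ a, N t s * πp s a = 1 := fun t => by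
    calc ∑ s, ∑ a, N t s * πp s a = ∑ s, N t s :=
          Finset.sum_congr rfl fun s _ => by rw [← Finset.mul_sum, (hπp s).2, mul_one]
      _ = 1 := hN1 t
  have hX0 : ∀ t, 0 ≤ ∑ s, ∑ a, M t s * πe s a * ρ s a := fun t =>
    Finset.sum_nonneg fun s _ => Finset.sum_nonneg fun a _ =>
      mul_nonneg (mul_nonneg (hM0 t s) ((hπe s).1 a)) ((hρ s a).1)
  have hY0 : ∀ t, 0 ≤ ∑ s, ∑ a, N t s * πp s a * ρ s a := fun t =>
    Finset.sum_nonneg fun s _ => Finset.sum_nonneg fun a _ =>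
      mul_nonneg (mul_nonneg (hN0 t s) ((hπp s).1 a)) ((hρ s a).1)
  have hXb : ∀ t, (∑ s, ∑ a, M t s * πe s a * ρ s a) ≤ Rmax := fun t => by
    calc ∑ s, ∑ a, M t s * πe s a * ρ s a ≤ ∑ s, ∑ a, M t s * πe s a * Rmax :=
          Finset.sum_le_sum fun s _ => Finset.sum_le_sum fun a _ =>
            mul_le_mul_of_nonneg_left ((hρ s a).2) (mul_nonneg (hM0 t s) ((hπe s).1 a))
      _ = (∑ s, ∑ a, M t s * πe s a) * Rmax := by
          rw [Finset.sum_mul]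
          exact Finset.sum_congr rfl fun s _ => by rw [Finset.sum_mul]
      _ = Rmax := by rw [hXmass t, one_mul]
  have hYb : ∀ t, (∑ s, ∑ a, N t s * πp s a * ρ s a) ≤ Rmax := fun t => by
    calc ∑ s, ∑ a, N t s * πp s a * ρ s a ≤ ∑ s, ∑ a, N t s * πp s a * Rmax :=
          Finset.sum_le_sum fun s _ => Finset.sum_le_sum fun a _ =>
            mul_le_mul_of_nonneg_left ((hρ s a).2) (mul_nonneg (hN0 t s) ((hπp s).1 a))
      _ = (∑ s, ∑ a, N t s * πp s a) * Rmax := by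
          rw [Finset.sum_mul]
          exact Finset.sum_congr rfl fun s _ => by rw [Finset.sum_mul]
      _ = Rmax := by rw [hYmass t, one_mul]
  have hD0 : ∀ t, 0 ≤ ∑ s, |M t s - N t s| := fun t =>
    Finset.sum_nonneg fun s _ => abs_nonneg _
  have hD2 : ∀ t, (∑ s, |M t s - N t s|) ≤ 2 := fun t => by
    calc ∑ s, |M t s - N t s| ≤ ∑ s, (M t s + N t s) := by
          refine Finset.sum_le_sum fun s _ => ?_
          rw [abs_sub_le_iff]
          constructor
          · nlinarith [hM0 t s, hN0 t s]
          · nlinarith [hM0 t s, hN0 t s]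
      _ = 2 := by rw [Finset.sum_add_distrib, hM1 t, hN1 t]; norm_num
  have hD00 : (∑ s, |M 0 s - N 0 s|) = 0 := by
    simp [hMdef, hNdef, stateDist]
  have hl1 : ∀ t, ∑ s, ∑ a, |M t s * πe s a - N t s * πp s a| ≤
      (∑ s, |M t s - N t s|) + ∑ s, M t s * ∑ a, |πp s a - πe s a| := fun t =>
    l1_step (M t) (N t) (hM0 t) πp πe (fun s a => (hπp s).1 a) (fun s => (hπp s).2)
  have hMstep : ∀ t s, M (t + 1) s = ∑ s', ∑ a, M t s' * πe s' a * P s' a s :=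
    fun t s => by rw [hMdef]; rfl
  have hNstep : ∀ t s, N (t + 1) s = ∑ s', ∑ a, N t s' * πp s' a * P s' a s :=
    fun t s => by rw [hNdef]; rfl
  have hrec : ∀ t, (∑ s, |M (t + 1) s - N (t + 1) s|) ≤
      (∑ s, |M t s - N t s|) + ∑ s, M t s * ∑ a, |πp s a - πe s a| := by
    intro t
    have hpt : ∀ s, |M (t + 1) s - N (t + 1) s| ≤
        ∑ s', ∑ a, |M t s' * πe s' a - N t s' * πp s' a| * P s' a s := by
      intro s
      rw [hMstep t s, hNstep t s, ← Finset.sum_sub_distrib]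
      refine (Finset.abs_sum_le_sum_abs _ _).trans (Finset.sum_le_sum fun s' _ => ?_)
      rw [← Finset.sum_sub_distrib]
      refine (Finset.abs_sum_le_sum_abs _ _).trans (Finset.sum_le_sum fun a _ => ?_)
      have h : M t s' * πe s' a * P s' a s - N t s' * πp s' a * P s' a s
          = (M t s' * πe s' a - N t s' * πp s' a) * P s' a s := by ring
      rw [h, abs_mul, abs_of_nonneg (hP0 s' a s)]
    calc ∑ s, |M (t + 1) s - N (t + 1) s|
        ≤ ∑ s, ∑ s', ∑ a, |M t s' * πe s' a - N t s' * πp s' a| * P s' a s :=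
          Finset.sum_le_sum fun s _ => hpt s
      _ = ∑ s', ∑ a, |M t s' * πe s' a - N t s' * πp s' a| := by
          rw [Finset.sum_comm]
          refine Finset.sum_congr rfl fun s' _ => ?_
          rw [Finset.sum_comm]
          refine Finset.sum_congr rfl fun a _ => ?_
          rw [← Finset.mul_sum, hP1 s' a, mul_one]
      _ ≤ _ := hl1 t
  have hgap : ∀ t, (∑ s, ∑ a, M t s * πe s a * ρ s a)
      - (∑ s, ∑ a, N t s * πp s a * ρ s a)
      ≤ (Rmax / 2) * ((∑ s, |M t s - N t s|) + ∑ s, M t s * ∑ a, |πp s a - πe s a|) := by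
    intro t
    have expand : ∑ s, ∑ a, (M t s * πe s a - N t s * πp s a) * (ρ s a - Rmax / 2)
        = (∑ s, ∑ a, M t s * πe s a * ρ s a) - (∑ s, ∑ a, N t s * πp s a * ρ s a)
          - (Rmax / 2) * (∑ s, ∑ a, M t s * πe s a)
          + (Rmax / 2) * (∑ s, ∑ a, N t s * πp s a) := by
      simp only [Finset.mul_sum, ← Finset.sum_sub_distrib, ← Finset.sum_add_distrib]
      exact Finset.sum_congr rfl fun s _ => Finset.sum_congr rfl fun a _ => by ring
    have hb : ∑ s, ∑ a, (M t s * πe s a - N t s * πp s a) * (ρ s a - Rmax / 2)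
        ≤ (Rmax / 2) * ((∑ s, |M t s - N t s|) + ∑ s, M t s * ∑ a, |πp s a - πe s a|) := by
      calc ∑ s, ∑ a, (M t s * πe s a - N t s * πp s a) * (ρ s a - Rmax / 2)
          ≤ ∑ s, ∑ a, |M t s * πe s a - N t s * πp s a| * (Rmax / 2) := by
            refine Finset.sum_le_sum fun s _ => Finset.sum_le_sum fun a _ => ?_
            refine (le_abs_self _).trans ?_
            rw [abs_mul]
            refine mul_le_mul_of_nonneg_left ?_ (abs_nonneg _)
            rw [abs_le]
            constructor
            · nlinarith [(hρ s a).1]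
            · nlinarith [(hρ s a).2]
        _ = (Rmax / 2) * ∑ s, ∑ a, |M t s * πe s a - N t s * πp s a| := by
            rw [Finset.mul_sum]
            refine Finset.sum_congr rfl fun s _ => ?_
            rw [Finset.mul_sum]
            exact Finset.sum_congr rfl fun a _ => mul_comm _ _
        _ ≤ _ := mul_le_mul_of_nonneg_left (hl1 t) (by positivity)
    calc (∑ s, ∑ a, M t s * πe s a * ρ s a) - (∑ s, ∑ a, N t s * πp s a * ρ s a)
        = ∑ s, ∑ a, (M t s * πe s a - N t s * πp s a) * (ρ s a - Rmax / 2) := by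
          rw [expand, hXmass t, hYmass t]; ring
      _ ≤ _ := hb
  exact pair_core γ Rmax hR hγ0 hγ1
    (fun t => ∑ s, ∑ a, M t s * πe s a * ρ s a)
    (fun t => ∑ s, ∑ a, N t s * πp s a * ρ s a)
    (fun t => ∑ s, |M t s - N t s|)
    (fun t => ∑ s, M t s * ∑ a, |πp s a - πe s a|)
    M (fun s => ∑ a, |πp s a - πe s a|)
    hM0 hM1 hΔ0 hΔ2 hX0 hXb hY0 hYb hD0 hD2 (fun t => rfl) hD00 hrec hgap

/-- Suboptimality bound: the expected value gap between an expert policy `π_E` and a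
policy `π` over a test distribution `T` of initial state-goal pairs is at most
`(2 R_max/(1−γ)²)` times the expected total variation between `π` and `π_E` under the
expert's discounted state occupancy. -/
theorem stmt12 {S G A : Type*} [Fintype S] [Fintype G] [Fintype A] [DecidableEq S]
    (P : S → A → S → ℝ) (r : S → A → G → ℝ) (Rmax γ : ℝ)
    (hR : 0 ≤ Rmax) (hr : ∀ s a g, 0 ≤ r s a g ∧ r s a g ≤ Rmax)
    (hγ0 : 0 ≤ γ) (hγ1 : γ < 1)
    (hP : ∀ s a, (∀ s', 0 ≤ P s a s') ∧ ∑ s', P s a s' = 1)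
    (π πE : S → G → A → ℝ)
    (hπ : ∀ s g, (∀ a, 0 ≤ π s g a) ∧ ∑ a, π s g a = 1)
    (hπE : ∀ s g, (∀ a, 0 ≤ πE s g a) ∧ ∑ a, πE s g a = 1)
    (T : S × G → ℝ) (hT0 : ∀ p, 0 ≤ T p) (hT1 : ∑ p, T p = 1) :
    ∑ p : S × G, T p * (goalValue P r γ πE p.1 p.2 - goalValue P r γ π p.1 p.2) ≤
      (2 * Rmax / (1 - γ) ^ 2) *
        ∑ p : S × G, T p * ∑ s, goalOcc P γ πE p.1 p.2 s *
          ((1 / 2) * ∑ a, |π s p.2 a - πE s p.2 a|) := by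
  have hpair : ∀ p : S × G,
      goalValue P r γ πE p.1 p.2 - goalValue P r γ π p.1 p.2 ≤
        (2 * Rmax / (1 - γ) ^ 2) * ∑ s, goalOcc P γ πE p.1 p.2 s *
          ((1 / 2) * ∑ a, |π s p.2 a - πE s p.2 a|) := by
    intro p
    obtain ⟨s0, g⟩ := p
    simp only [goalValue, goalOcc]
    exact pair_bound P (fun s a => r s a g) Rmax γ hR (fun s a => hr s a g) hγ0 hγ1 hP
      (fun s a => π s g a) (fun s a => πE s g a)
      (fun s => hπ s g) (fun s => hπE s g) s0
  calc ∑ p : S × G, T p * (goalValue P r γ πE p.1 p.2 - goalValue P r γ π p.1 p.2)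
      ≤ ∑ p : S × G, T p * ((2 * Rmax / (1 - γ) ^ 2) *
          ∑ s, goalOcc P γ πE p.1 p.2 s * ((1 / 2) * ∑ a, |π s p.2 a - πE s p.2 a|)) :=
        Finset.sum_le_sum fun p _ => mul_le_mul_of_nonneg_left (hpair p) (hT0 p)
    _ = (2 * Rmax / (1 - γ) ^ 2) *
        ∑ p : S × G, T p * ∑ s, goalOcc P γ πE p.1 p.2 s *
          ((1 / 2) * ∑ a, |π s p.2 a - πE s p.2 a|) := by
        rw [Finset.mul_sum]
        exact Finset.sum_congr rfl fun p _ => by ring
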